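/- arXiv:2003.07165 — 2 statements merged into one kernel-verified Lean document; each statement's English description precedes it below -/
import Mathlib

section
/- Let a, b ≥ 0 and consider S_{a+b} × S_{a+b} acting on pairs of lists. Fix distinct reals s_1 > ... > s_{a+b}. For any partition of {s_1,...,s_{a+b}} into Φ = {φ_1 > ... > φ_a} and Ψ = {ψ_1 > ... > ψ_b}, the permutation in S_{a+b} × S_{a+b} sending (φ_1,...,φ_a,ψ_1,...,ψ_b ; ψ_1,...,ψ_b,φ_1,...,φ_a) to (s_1,...,s_{a+b} ; s_1,...,s_{a+b}) has sign (-1)^{ab}, independent of the choice of Φ. -/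
/-! Since `Fin.append φ ψ` is injective, `u = σ * v` where `σ` is the block swap of `Fin (a + b)`
exchanging the first `a` and the last `b` positions. This `σ` is the `a`-th power of the cyclic
rotation of `Fin (a + b)`, so its sign is `(-1) ^ ((a + b - 1) * a) = (-1) ^ (a * b)`, and
`sign u * sign v = sign σ` because signs square to `1`. -/

open Equiv

lemma finRotate_pow_apply_val (n k : ℕ) (x : Fin n) :
    ((finRotate n ^ k) x : ℕ) = (x + k) % n := by
  cases n with
  | zero => exact x.elim0
  | succ n =>
    induction k with
    | zero => simp [Nat.mod_eq_of_lt x.isLt]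
    | succ k ih =>
      rw [pow_succ', Perm.mul_apply, finRotate_apply, Fin.val_add, ih, Fin.val_one',
        ← Nat.add_mod, Nat.add_assoc]

lemma finCongr_trans_finAddFlip_eq_finRotate_pow (a b : ℕ) :
    ((finCongr (add_comm a b)).trans finAddFlip : Perm (Fin (a + b))) = finRotate (a + b) ^ a := by
  ext x
  rw [finRotate_pow_apply_val, trans_apply, finCongr_apply]
  have hx : x.val < b + a := by omega
  rw [show Fin.cast (add_comm a b) x = (⟨x.val, hx⟩ : Fin (b + a)) from rfl]
  by_cases hxb : x.val < b
  · rw [finAddFlip_apply_mk_left hxb, Nat.mod_eq_of_lt (by omega)]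
    exact Nat.add_comm a x
  · rw [finAddFlip_apply_mk_right (by omega) hx, show x.val + a = (x.val - b) + 1 * (a + b) by omega,
      Nat.add_mul_mod_self_right, Nat.mod_eq_of_lt (by omega)]

lemma sign_finCongr_trans_finAddFlip (a b : ℕ) :
    Perm.sign ((finCongr (add_comm a b)).trans finAddFlip : Perm (Fin (a + b))) =
      (-1) ^ (a * b) := by
  have hexp : (a + b - 1) * a = a * b + a * (a - 1) := by
    cases a with
    | zero => simp
    | succ c => rw [Nat.add_sub_cancel, show c + 1 + b - 1 = c + b by omega]; ring
  rw [finCongr_trans_finAddFlip_eq_finRotate_pow, map_pow, sign_finRotate, ← pow_mul, hexp,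
    pow_add, (Nat.even_mul_pred_self a).neg_one_pow, mul_one]

lemma Fin.append_apply_finAddFlip {α : Type*} {m n : ℕ} (xs : Fin m → α) (ys : Fin n → α)
    (i : Fin (n + m)) : Fin.append xs ys (finAddFlip i) = Fin.append ys xs i := by
  induction i using Fin.addCases with
  | left j => rw [Fin.append_left, finAddFlip_apply_castAdd, Fin.append_right]
  | right j => rw [Fin.append_right, finAddFlip_apply_natAdd, Fin.append_left]

theorem stmt_5_general (a b : ℕ) (s : Fin (a + b) → ℝ)
    (φ : Fin a → ℝ) (ψ : Fin b → ℝ) (hφ : StrictAnti φ) (hψ : StrictAnti ψ)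
    (hdisj : Disjoint (Set.range φ) (Set.range ψ))
    (u v : Equiv.Perm (Fin (a + b)))
    (hu : ∀ i : Fin (a + b), Fin.append φ ψ (u i) = s i)
    (hv : ∀ i : Fin (a + b), Fin.append ψ φ (Fin.cast (Nat.add_comm a b) (v i)) = s i) :
    Equiv.Perm.sign u * Equiv.Perm.sign v = (-1 : ℤˣ) ^ (a * b) := by
  set σ : Perm (Fin (a + b)) := (finCongr (add_comm a b)).trans finAddFlip
  have hinj : Function.Injective (Fin.append φ ψ) :=
    Fin.append_injective_iff.mpr
      ⟨hφ.injective, hψ.injective, Set.disjoint_range_iff.mp hdisj⟩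
  have huv : u = σ * v := by
    ext i : 1
    apply hinj
    rw [hu i, Perm.mul_apply, trans_apply, finCongr_apply, Fin.append_apply_finAddFlip, hv i]
  rw [huv, map_mul, sign_finCongr_trans_finAddFlip, mul_assoc, Int.units_mul_self, mul_one]

/-- For distinct reals s_1 > ... > s_{a+b} partitioned into Φ = {φ_1 > ... > φ_a} and
Ψ = {ψ_1 > ... > ψ_b}, the pair of permutations sorting the two lists
(φ_1,...,φ_a,ψ_1,...,ψ_b) and (ψ_1,...,ψ_b,φ_1,...,φ_a) into (s_1,...,s_{a+b}) has
sign (-1)^{ab}, independently of the choice of Φ. -/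
theorem stmt_5 (a b : ℕ) (s : Fin (a + b) → ℝ) (hs : StrictAnti s)
    (φ : Fin a → ℝ) (ψ : Fin b → ℝ) (hφ : StrictAnti φ) (hψ : StrictAnti ψ)
    (hdisj : Disjoint (Set.range φ) (Set.range ψ))
    (hunion : Set.range φ ∪ Set.range ψ = Set.range s)
    (u v : Equiv.Perm (Fin (a + b)))
    (hu : ∀ i : Fin (a + b), Fin.append φ ψ (u i) = s i)
    (hv : ∀ i : Fin (a + b), Fin.append ψ φ (Fin.cast (Nat.add_comm a b) (v i)) = s i) :
    Equiv.Perm.sign u * Equiv.Perm.sign v = (-1 : ℤˣ) ^ (a * b) :=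
  stmt_5_general a b s φ ψ hφ hψ hdisj u v hu hv
end

section
/- Let Φ = {φ_1 > ... > φ_a}, Ψ = {ψ_1 > ... > ψ_b} and Φ' = {κ_1 > ... > κ_a}, Ψ' = {η_1 > ... > η_b} be two partitions of the same set of a+b distinct reals into parts of sizes a and b. Then the permutation of the 2(a+b) positions taking the concatenated list (φ_1,...,φ_a,ψ_1,...,ψ_b, ψ_1,...,ψ_b,φ_1,...,φ_a) to (κ_1,...,κ_a,η_1,...,η_b, η_1,...,η_b,κ_1,...,κ_a) (i.e., rearranging within the first a+b positions and within the last a+b positions separately) has sign +1. -/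
private lemma append_inj {a b : ℕ} (φ : Fin a → ℝ) (ψ : Fin b → ℝ)
    (hφ : Function.Injective φ) (hψ : Function.Injective ψ)
    (hdisj : Disjoint (Set.range φ) (Set.range ψ)) :
    Function.Injective (Fin.append φ ψ) := by
  intro x y h
  refine Fin.addCases (motive := fun x => ∀ y, Fin.append φ ψ x = Fin.append φ ψ y → x = y)
    ?_ ?_ x y h <;> intro i <;>
    refine Fin.addCases ?_ ?_ <;> intro j h' <;>
    simp only [Fin.append_left, Fin.append_right] at h'
  · exact congrArg _ (hφ h')
  · exact ((Set.disjoint_left.1 hdisj ⟨i, h'⟩ ⟨j, rfl⟩)).elim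
  · exact ((Set.disjoint_left.1 hdisj ⟨j, h'.symm⟩ ⟨i, rfl⟩)).elim
  · exact congrArg _ (hψ h')

private lemma append_flip {a b : ℕ} (φ : Fin a → ℝ) (ψ : Fin b → ℝ) (x : Fin (a + b)) :
    Fin.append ψ φ (Fin.cast (Nat.add_comm a b) x) =
      Fin.append φ ψ (((finCongr (Nat.add_comm a b)).trans finAddFlip) x) := by
  have main : ∀ y : Fin (b + a), Fin.append ψ φ y = Fin.append φ ψ (finAddFlip y) := by
    refine Fin.addCases ?_ ?_ <;> intro i
    · rw [Fin.append_left, finAddFlip_apply_castAdd, Fin.append_right]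
    · rw [Fin.append_right, finAddFlip_apply_natAdd, Fin.append_left]
  rw [main]; rfl

/-- Claim 1 of Theorem 5.9: for two partitions {φ_1>...>φ_a} ∪ {ψ_1>...>ψ_b} and
{κ_1>...>κ_a} ∪ {η_1>...>η_b} of the same set of a+b distinct reals, the permutation of
the 2(a+b) positions taking (φ,ψ,ψ,φ) to (κ,η,η,κ), rearranging the first a+b and the
last a+b positions separately, has sign +1. -/
theorem stmt_6 (a b : ℕ)
    (φ κ : Fin a → ℝ) (ψ η : Fin b → ℝ)
    (hφ : StrictAnti φ) (hψ : StrictAnti ψ) (hκ : StrictAnti κ) (hη : StrictAnti η)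
    (hdisj1 : Disjoint (Set.range φ) (Set.range ψ))
    (hdisj2 : Disjoint (Set.range κ) (Set.range η))
    (hsame : Set.range φ ∪ Set.range ψ = Set.range κ ∪ Set.range η)
    (u v : Equiv.Perm (Fin (a + b)))
    (hu : ∀ i : Fin (a + b), Fin.append φ ψ (u i) = Fin.append κ η i)
    (hv : ∀ i : Fin (a + b),
      Fin.append ψ φ (Fin.cast (Nat.add_comm a b) (v i)) =
        Fin.append η κ (Fin.cast (Nat.add_comm a b) i)) :
    Equiv.Perm.sign u * Equiv.Perm.sign v = 1 := by
  set τ : Equiv.Perm (Fin (a + b)) := (finCongr (Nat.add_comm a b)).trans finAddFlip with hτ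
  have hinj : Function.Injective (Fin.append φ ψ) :=
    append_inj φ ψ hφ.injective hψ.injective hdisj1
  have key : ∀ i, τ (v i) = u (τ i) := by
    intro i
    apply hinj
    rw [← append_flip, hv i, append_flip, ← hτ]
    exact (hu (τ i)).symm
  have hvu : v = τ⁻¹ * u * τ := by
    ext i
    simp only [Equiv.Perm.mul_apply]
    rw [← key]
    simp
  have : Equiv.Perm.sign v = Equiv.Perm.sign u := by
    have : v = τ⁻¹ * u * τ⁻¹⁻¹ := by rw [inv_inv]; exact hvu
    rw [this]; simp only [map_mul, map_inv]
    rw [inv_inv, mul_comm ((Equiv.Perm.sign τ)⁻¹) (Equiv.Perm.sign u), mul_assoc,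
      inv_mul_cancel, mul_one]
  rw [this]
  exact Int.units_mul_self _
end
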